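/- The average primal sequence of Algorithm (DG) satisfies, for all k ≥ 0, ‖û^k − u*‖² ≤ (1/(k+1)) · [ L_G ‖x^0‖² / σ_f + 4 L_G R_d (R_d + ‖x^0‖) / σ_f ]. -/

import Mathlib

/-!
Strong convexity of `f` makes the dual function `d(y) = L(u(y), y)` smooth with constant
`‖G‖² / σ`, so the projected gradient ascent step obeys the usual three-point inequality; with the
linearization of `d` at `x^j` evaluated at `x*` equal to `L(u^j, x*)`, weak duality gives
`α_j (L(u^j, x*) - f*) ≤ (‖x^j - x*‖² - ‖x^{j+1} - x*‖²) / 2`. Summing and applying Jensen to the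
convex function `L(·, x*)` bounds `S_k (L(û^k, x*) - f*)` by `R_d² / 2`, while `u*` minimizes the
`σ`-strongly convex `L(·, x*)` with value `f*`, so `L(û^k, x*) - f* ≥ σ/2 ‖û^k - u*‖²`. Finally
`S_k ≥ (k + 1) / L_G`.
-/

open scoped RealInnerProductSpace

open Finset Filter Topology

lemma UniformConvexOn.subset {E : Type*} [NormedAddCommGroup E] [NormedSpace ℝ E]
    {s t : Set E} {φ : ℝ → ℝ} {f : E → ℝ} (hf : UniformConvexOn t φ f) (hst : s ⊆ t)
    (hs : Convex ℝ s) : UniformConvexOn s φ f :=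
  ⟨hs, fun _ hx _ hy => hf.2 (hst hx) (hst hy)⟩

section StrongConvexity

variable {E : Type*} [NormedAddCommGroup E] [InnerProductSpace ℝ E]
  {s : Set E} {σ : ℝ} {φ : E → ℝ} {m u : E}

lemma StrongConvexOn.add_sq_le_of_isMinOn (hφ : StrongConvexOn s σ φ) (hm : IsMinOn φ s m)
    (hms : m ∈ s) (hu : u ∈ s) : φ m + σ / 2 * ‖u - m‖ ^ 2 ≤ φ u := by
  have hscaled : ∀ a ∈ Set.Ioo (0 : ℝ) 1, a * (σ / 2 * ‖u - m‖ ^ 2) ≤ φ u - φ m := by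
    rintro a ⟨ha0, ha1⟩
    have hb : 0 ≤ 1 - a := sub_nonneg.2 ha1.le
    have hconv := hφ.2 hms hu ha0.le hb (add_sub_cancel a 1)
    have hmin := isMinOn_iff.1 hm _ (hφ.1 hms hu ha0.le hb (add_sub_cancel a 1))
    rw [smul_eq_mul, smul_eq_mul, norm_sub_rev] at hconv
    refine le_of_mul_le_mul_left ?_ (sub_pos.2 ha1)
    linarith
  have hlim : Tendsto (fun a : ℝ => a * (σ / 2 * ‖u - m‖ ^ 2)) (𝓝[<] 1)
      (𝓝 (1 * (σ / 2 * ‖u - m‖ ^ 2))) :=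
    ((continuous_id.mul continuous_const).tendsto 1).mono_left nhdsWithin_le_nhds
  have := le_of_tendsto hlim (eventually_of_mem (Ioo_mem_nhdsLT zero_lt_one) hscaled)
  linarith

end StrongConvexity

lemma real_inner_sub_le_zero_of_forall_norm_sub_le {F : Type*} [NormedAddCommGroup F]
    [InnerProductSpace ℝ F] {C : Set F} (hC : Convex ℝ C) {z P : F} (hP : P ∈ C)
    (hPmin : ∀ w ∈ C, ‖z - P‖ ≤ ‖z - w‖) : ∀ w ∈ C, ⟪z - P, w - P⟫ ≤ 0 := by
  have : Nonempty C := ⟨⟨P, hP⟩⟩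
  refine (norm_eq_iInf_iff_real_inner_le_zero hC hP).1 (le_antisymm ?_ ?_)
  · exact le_ciInf fun w => hPmin w w.2
  · exact ciInf_le ⟨0, by rintro r ⟨w, rfl⟩; positivity⟩ (⟨P, hP⟩ : C)

lemma projected_ascent_step {F : Type*} [NormedAddCommGroup F] [InnerProductSpace ℝ F]
    {C : Set F} (hC : Convex ℝ C) {φ : F → ℝ} {L α : ℝ} {y q P w : F}
    (hdesc : φ y + ⟪q, P - y⟫ - L / 2 * ‖P - y‖ ^ 2 ≤ φ P) (hα : 0 ≤ α) (hαL : α * L ≤ 1)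
    (hP : P ∈ C) (hPmin : ∀ v ∈ C, ‖y + α • q - P‖ ≤ ‖y + α • q - v‖) (hw : w ∈ C) :
    α * (φ y + ⟪q, w - y⟫) ≤ α * φ P + (‖y - w‖ ^ 2 - ‖P - w‖ ^ 2) / 2 := by
  have hvi := real_inner_sub_le_zero_of_forall_norm_sub_le hC hP hPmin w hw
  have hvi' : α * ⟪q, w - P⟫ ≤ ⟪P - y, w - P⟫ := by
    rw [show y + α • q - P = α • q - (P - y) by abel, inner_sub_left, real_inner_smul_left] at hvi
    linarith
  have hthree_point : 2 * ⟪P - y, w - P⟫ = ‖y - w‖ ^ 2 - ‖P - w‖ ^ 2 - ‖P - y‖ ^ 2 := by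
    rw [show y - w = -((P - y) + (w - P)) by abel, norm_neg, norm_add_sq_real,
      ← norm_neg (P - w), neg_sub]
    ring
  have hquad : α * (L / 2 * ‖P - y‖ ^ 2) ≤ ‖P - y‖ ^ 2 / 2 := by
    nlinarith [sq_nonneg ‖P - y‖]
  have hsplit : ⟪q, w - y⟫ = ⟪q, w - P⟫ + ⟪q, P - y⟫ := by
    rw [← inner_add_right, sub_add_sub_cancel]
  nlinarith [mul_le_mul_of_nonneg_left hdesc hα]

section Lagrangian

variable {E F : Type*} [NormedAddCommGroup E] [InnerProductSpace ℝ E]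
  [NormedAddCommGroup F] [InnerProductSpace ℝ F]
  {f : E → ℝ} {G : E →L[ℝ] F} {g : F} {U : Set E} {σ : ℝ} {K : Set F}

def lagrangian (f : E → ℝ) (G : E →L[ℝ] F) (g : F) (v : E) (y : F) : ℝ :=
  f v + ⟪y, -(G v) - g⟫

lemma lagrangian_add_inner_sub (v : E) (y z : F) :
    lagrangian f G g v y + ⟪-(G v) - g, z - y⟫ = lagrangian f G g v z := by
  simp only [lagrangian, inner_sub_right, real_inner_comm (-(G v) - g)]
  ring

lemma lagrangian_le_of_mem_dual {v : E} {y : F} (hv : G v + g ∈ K)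
    (hy : y ∈ PointedCone.dual (innerₗ F) K) : lagrangian f G g v y ≤ f v := by
  have : 0 ≤ ⟪G v + g, y⟫ := PointedCone.mem_dual.1 hy hv
  rw [lagrangian, ← neg_add', inner_neg_right, real_inner_comm]
  linarith

lemma strongConvexOn_lagrangian (hf : StrongConvexOn U σ f) (y : F) :
    StrongConvexOn U σ (lagrangian f G g · y) := by
  have haff : ConvexOn ℝ U fun v => ⟪y, -(G v) - g⟫ := by
    have hform : (fun v => ⟪y, -(G v) - g⟫) = fun v => ((innerSL ℝ y).comp (-G)) v + -⟪y, g⟫ := by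
      ext v
      simp [sub_eq_add_neg, inner_add_right]
    rw [hform]
    exact (((innerSL ℝ y).comp (-G)).toLinearMap.convexOn hf.1).add_const _
  simpa [lagrangian] using! hf.add (uniformConvexOn_zero.2 haff)

variable {u : F → E}

lemma lagrangian_descent (hσ : 0 < σ) (hf : StrongConvexOn U σ f) (hu : ∀ y, u y ∈ U)
    (hmin : ∀ y, IsMinOn (lagrangian f G g · y) U (u y)) (y z : F) :
    lagrangian f G g (u y) y + ⟪-(G (u y)) - g, z - y⟫ - ‖G‖ ^ 2 / σ / 2 * ‖z - y‖ ^ 2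
      ≤ lagrangian f G g (u z) z := by
  have hgrowth := (strongConvexOn_lagrangian hf y).add_sq_le_of_isMinOn (hmin y) (hu y) (hu z)
  have hsplit : ⟪-(G (u z)) - g, z - y⟫ = ⟪-(G (u y)) - g, z - y⟫ + ⟪G (u y - u z), z - y⟫ := by
    rw [← inner_add_left, map_sub]
    congr 1
    abel
  have hcs : -(‖G‖ * ‖u z - u y‖ * ‖z - y‖) ≤ ⟪G (u y - u z), z - y⟫ :=
    calc -(‖G‖ * ‖u z - u y‖ * ‖z - y‖) = -(‖G‖ * ‖u y - u z‖ * ‖z - y‖) := by rw [norm_sub_rev]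
      _ ≤ -(‖G (u y - u z)‖ * ‖z - y‖) := by gcongr; exact G.le_opNorm _
      _ ≤ ⟪G (u y - u z), z - y⟫ := neg_le_of_abs_le (abs_real_inner_le_norm _ _)
  have hsq : 0 ≤ σ / 2 * ‖u z - u y‖ ^ 2 - ‖G‖ * ‖u z - u y‖ * ‖z - y‖
      + ‖G‖ ^ 2 / σ / 2 * ‖z - y‖ ^ 2 := by
    have hsquare : σ / 2 * ‖u z - u y‖ ^ 2 - ‖G‖ * ‖u z - u y‖ * ‖z - y‖
        + ‖G‖ ^ 2 / σ / 2 * ‖z - y‖ ^ 2 = (σ * ‖u z - u y‖ - ‖G‖ * ‖z - y‖) ^ 2 / (2 * σ) := by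
      field_simp
      ring
    rw [hsquare]
    positivity
  rw [← lagrangian_add_inner_sub (u z) y z]
  linarith

lemma add_sq_le_lagrangian_of_saddle (hf : StrongConvexOn U σ f)
    (hmin : ∀ y, IsMinOn (lagrangian f G g · y) U (u y)) {ustar v : E} {xstar : F}
    (hustar : ustar ∈ U) (hfeas : G ustar + g ∈ K) (hxstar : xstar ∈ PointedCone.dual (innerₗ F) K)
    (hdual : lagrangian f G g (u xstar) xstar = f ustar) (hv : v ∈ U) :
    f ustar + σ / 2 * ‖v - ustar‖ ^ 2 ≤ lagrangian f G g v xstar := by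
  have hval : lagrangian f G g ustar xstar = f ustar :=
    (lagrangian_le_of_mem_dual hfeas hxstar).antisymm
      (hdual ▸ isMinOn_iff.1 (hmin xstar) _ hustar)
  have hmin' : IsMinOn (lagrangian f G g · xstar) U ustar :=
    isMinOn_iff.2 fun w hw => (hval.trans hdual.symm).trans_le (isMinOn_iff.1 (hmin xstar) w hw)
  exact hval ▸ (strongConvexOn_lagrangian hf xstar).add_sq_le_of_isMinOn hmin' hustar hv

end Lagrangian

section DualGradient

variable {E F : Type*} [NormedAddCommGroup E] [InnerProductSpace ℝ E]
  [NormedAddCommGroup F] [InnerProductSpace ℝ F]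
  {f : E → ℝ} {G : E →L[ℝ] F} {g : F} {U : Set E} {σ : ℝ} {K : Set F} {u : F → E}
  {ustar : E} {proj : F → F}

lemma dualGradient_step (hσ : 0 < σ) (hf : StrongConvexOn U σ f) (hu : ∀ y, u y ∈ U)
    (hmin : ∀ y, IsMinOn (lagrangian f G g · y) U (u y)) (hustar : ustar ∈ U)
    (hfeas : G ustar + g ∈ K)
    (hproj : ∀ z, proj z ∈ PointedCone.dual (innerₗ F) K ∧
      ∀ w ∈ PointedCone.dual (innerₗ F) K, ‖z - proj z‖ ≤ ‖z - w‖)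
    {α : ℝ} (hα : 0 ≤ α) (hαL : α * (‖G‖ ^ 2 / σ) ≤ 1) (y : F) {w : F}
    (hw : w ∈ PointedCone.dual (innerₗ F) K) :
    α * (lagrangian f G g (u y) w - f ustar)
      ≤ (‖y - w‖ ^ 2 - ‖proj (y + α • (-(G (u y)) - g)) - w‖ ^ 2) / 2 := by
  set P := proj (y + α • (-(G (u y)) - g))
  have hstep := projected_ascent_step (φ := fun z => lagrangian f G g (u z) z)
    (PointedCone.convex _) (lagrangian_descent hσ hf hu hmin y P) hα hαL (hproj _).1 (hproj _).2 hw
  have hweak : lagrangian f G g (u P) P ≤ f ustar :=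
    (isMinOn_iff.1 (hmin P) _ hustar).trans (lagrangian_le_of_mem_dual hfeas (hproj _).1)
  rw [lagrangian_add_inner_sub] at hstep
  nlinarith [mul_le_mul_of_nonneg_left hweak hα]

theorem sq_norm_centerMass_sub_le (hσ : 0 < σ) (hf : StrongConvexOn U σ f)
    (hu : ∀ y, u y ∈ U) (hmin : ∀ y, IsMinOn (lagrangian f G g · y) U (u y))
    (hustar : ustar ∈ U) (hfeas : G ustar + g ∈ K) {xstar : F}
    (hxstar : xstar ∈ PointedCone.dual (innerₗ F) K)
    (hdual : lagrangian f G g (u xstar) xstar = f ustar)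
    (hproj : ∀ z, proj z ∈ PointedCone.dual (innerₗ F) K ∧
      ∀ w ∈ PointedCone.dual (innerₗ F) K, ‖z - proj z‖ ≤ ‖z - w‖)
    {α : ℕ → ℝ} (hα : ∀ j, 0 < α j) (hαL : ∀ j, α j * (‖G‖ ^ 2 / σ) ≤ 1) {x : ℕ → F}
    (hx : ∀ j, x (j + 1) = proj (x j + α j • (-(G (u (x j))) - g))) (k : ℕ) :
    ‖(range (k + 1)).centerMass α (u ∘ x) - ustar‖ ^ 2
      ≤ ‖x 0 - xstar‖ ^ 2 / (σ * ∑ j ∈ range (k + 1), α j) := by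
  set ℓ : E → ℝ := (lagrangian f G g · xstar)
  set S := ∑ j ∈ range (k + 1), α j
  have hS : 0 < S := sum_pos (fun j _ => hα j) nonempty_range_add_one
  have htelescope : ∑ j ∈ range (k + 1), α j * (ℓ (u (x j)) - f ustar) ≤ ‖x 0 - xstar‖ ^ 2 / 2 :=
    calc ∑ j ∈ range (k + 1), α j * (ℓ (u (x j)) - f ustar)
        ≤ ∑ j ∈ range (k + 1), (‖x j - xstar‖ ^ 2 - ‖x (j + 1) - xstar‖ ^ 2) / 2 :=
          sum_le_sum fun j _ => hx j ▸
            dualGradient_step hσ hf hu hmin hustar hfeas hproj (hα j).le (hαL j) (x j) hxstar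
      _ = (‖x 0 - xstar‖ ^ 2 - ‖x (k + 1) - xstar‖ ^ 2) / 2 := by
          rw [← sum_div, sum_range_sub' (fun j => ‖x j - xstar‖ ^ 2)]
      _ ≤ ‖x 0 - xstar‖ ^ 2 / 2 := by gcongr; exact sub_le_self _ (sq_nonneg _)
  have hconvex : ConvexOn ℝ U ℓ :=
    (strongConvexOn_lagrangian hf xstar).convexOn fun r => by positivity
  set ubar := (range (k + 1)).centerMass α (u ∘ x)
  have hubar : ubar ∈ U := hconvex.1.centerMass_mem (fun j _ => (hα j).le) hS fun j _ => hu (x j)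
  have hjensen : S * ℓ ubar ≤ ∑ j ∈ range (k + 1), α j * ℓ (u (x j)) := by
    have h : ℓ ubar ≤ S⁻¹ * ∑ j ∈ range (k + 1), α j * ℓ (u (x j)) :=
      hconvex.map_centerMass_le (fun j _ => (hα j).le) hS fun j _ => hu (x j)
    rwa [le_inv_mul_iff₀ hS] at h
  have hgrowth := add_sq_le_lagrangian_of_saddle hf hmin hustar hfeas hxstar hdual hubar
  have hsum : ∑ j ∈ range (k + 1), α j * (ℓ (u (x j)) - f ustar)
      = ∑ j ∈ range (k + 1), α j * ℓ (u (x j)) - S * f ustar := by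
    simp only [mul_sub, sum_sub_distrib, sum_mul, S]
  rw [le_div_iff₀ (by positivity)]
  nlinarith [mul_le_mul_of_nonneg_left hgrowth hS.le]

end DualGradient

theorem stmt_7_general {n p : ℕ}
    (f : EuclideanSpace ℝ (Fin n) → ℝ) (σf : ℝ) (hσf : 0 < σf)
    (hfsc : StrongConvexOn Set.univ σf f)
    (U : Set (EuclideanSpace ℝ (Fin n))) (hUcv : Convex ℝ U)
    (G : EuclideanSpace ℝ (Fin n) →L[ℝ] EuclideanSpace ℝ (Fin p)) (hG : G ≠ 0) (g : EuclideanSpace ℝ (Fin p))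
    (K : Set (EuclideanSpace ℝ (Fin p)))
    (Kstar : Set (EuclideanSpace ℝ (Fin p)))
    (hKstar : Kstar = {x : EuclideanSpace ℝ (Fin p) | ∀ v ∈ K, 0 ≤ ⟪x, v⟫})
    (Lag : EuclideanSpace ℝ (Fin n) → EuclideanSpace ℝ (Fin p) → ℝ)
    (hLag : ∀ u x, Lag u x = f u + ⟪x, -(G u) - g⟫)
    (uu : EuclideanSpace ℝ (Fin p) → EuclideanSpace ℝ (Fin n))
    (huu : ∀ x : EuclideanSpace ℝ (Fin p), uu x ∈ U ∧ ∀ u ∈ U, Lag (uu x) x ≤ Lag u x)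
    (d : EuclideanSpace ℝ (Fin p) → ℝ) (hd : ∀ x, d x = Lag (uu x) x)
    (ustar : EuclideanSpace ℝ (Fin n))
    (hustar : ustar ∈ U ∧ G ustar + g ∈ K ∧ ∀ u ∈ U, G u + g ∈ K → f ustar ≤ f u)
    (fstar : ℝ) (hfstar : fstar = f ustar)
    (Xstar : Set (EuclideanSpace ℝ (Fin p))) (hXstar : Xstar = {x ∈ Kstar | d x = fstar})
    (Ld : ℝ) (hLd : Ld = ‖G‖ ^ 2 / σf)
    (projKs : EuclideanSpace ℝ (Fin p) → EuclideanSpace ℝ (Fin p))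
    (hprojKs : ∀ z : EuclideanSpace ℝ (Fin p), projKs z ∈ Kstar ∧ ∀ w ∈ Kstar, ‖z - projKs z‖ ≤ ‖z - w‖)
    (LG : ℝ) (hLG : Ld ≤ LG) (α : ℕ → ℝ)
    (hα : ∀ k, 1 / LG ≤ α k ∧ α k ≤ 1 / Ld)
    (x : ℕ → EuclideanSpace ℝ (Fin p))
    (hxrec : ∀ k, x (k + 1) = projKs (x k + α k • (-(G (uu (x k))) - g)))
    (xstar : EuclideanSpace ℝ (Fin p)) (hxstar : xstar ∈ Xstar)
    (Rd : ℝ) (hRd : Rd = ‖x 0 - xstar‖)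
    (S : ℕ → ℝ) (hS : ∀ k, S k = ∑ j ∈ Finset.range (k + 1), α j)
    (uhat : ℕ → EuclideanSpace ℝ (Fin n))
    (huhat : ∀ k, uhat k = (S k)⁻¹ • ∑ j ∈ Finset.range (k + 1), α j • uu (x j))
 :
    ∀ k : ℕ,
      ‖uhat k - ustar‖ ^ 2 ≤
        (1 / ((k : ℝ) + 1)) *
          (LG * ‖x 0‖ ^ 2 / σf + 4 * LG * Rd * (Rd + ‖x 0‖) / σf) := by
  intro k
  obtain rfl : Kstar = PointedCone.dual (innerₗ _) K := by
    ext y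
    simp [hKstar, real_inner_comm]
  obtain rfl : Lag = lagrangian f G g := funext fun v => funext (hLag v)
  obtain ⟨hxstarK, hdxstar⟩ : xstar ∈ PointedCone.dual (innerₗ _) K ∧ d xstar = fstar :=
    by rwa [hXstar] at hxstar
  have hLd0 : 0 < Ld := hLd ▸ by have := norm_pos_iff.2 hG; positivity
  have hLG0 : 0 < LG := hLd0.trans_le hLG
  have hbound := sq_norm_centerMass_sub_le hσf (hfsc.subset (Set.subset_univ U) hUcv)
    (fun y => (huu y).1) (fun y => isMinOn_iff.2 (huu y).2) hustar.1 hustar.2.1 hxstarK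
    (by rw [← hd, hdxstar, hfstar]) hprojKs (fun j => (one_div_pos.2 hLG0).trans_le (hα j).1)
    (fun j => hLd ▸ (le_div_iff₀ hLd0).1 (hα j).2) hxrec k
  have hSk : ((k : ℝ) + 1) / LG ≤ S k :=
    calc ((k : ℝ) + 1) / LG = ∑ _j ∈ Finset.range (k + 1), 1 / LG := by
          rw [Finset.sum_const, Finset.card_range, nsmul_eq_mul]
          push_cast
          ring
      _ ≤ S k := hS k ▸ Finset.sum_le_sum fun j _ => (hα j).1
  have huhat_eq : uhat k = (Finset.range (k + 1)).centerMass α (uu ∘ x) := by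
    rw [huhat, hS]
    rfl
  rw [← huhat_eq, ← hS, ← hRd] at hbound
  have hRd0 : 0 ≤ Rd := hRd ▸ norm_nonneg _
  calc ‖uhat k - ustar‖ ^ 2 ≤ Rd ^ 2 / (σf * S k) := hbound
    _ ≤ Rd ^ 2 / (σf * (((k : ℝ) + 1) / LG)) := by gcongr
    _ = 1 / ((k : ℝ) + 1) * (LG * Rd ^ 2 / σf) := by field_simp
    _ ≤ 1 / ((k : ℝ) + 1) * (LG * ‖x 0‖ ^ 2 / σf + 4 * LG * Rd * (Rd + ‖x 0‖) / σf) := by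
        gcongr
        rw [← add_div]
        gcongr
        nlinarith [sq_nonneg ‖x 0‖, mul_nonneg hRd0 (norm_nonneg (x 0))]

theorem stmt_7 {n p : ℕ}
    (f : EuclideanSpace ℝ (Fin n) → ℝ) (σf : ℝ) (hσf : 0 < σf)
    (hfc : Continuous f) (hfsc : StrongConvexOn Set.univ σf f)
    (U : Set (EuclideanSpace ℝ (Fin n))) (hUne : U.Nonempty) (hUcl : IsClosed U) (hUcv : Convex ℝ U)
    (G : EuclideanSpace ℝ (Fin n) →L[ℝ] EuclideanSpace ℝ (Fin p)) (hG : G ≠ 0) (g : EuclideanSpace ℝ (Fin p))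
    (K : Set (EuclideanSpace ℝ (Fin p))) (hKne : K.Nonempty) (hKcl : IsClosed K) (hKcv : Convex ℝ K)
    (hKcone : ∀ c : ℝ, 0 ≤ c → ∀ v ∈ K, c • v ∈ K)
    (Kstar : Set (EuclideanSpace ℝ (Fin p)))
    (hKstar : Kstar = {x : EuclideanSpace ℝ (Fin p) | ∀ v ∈ K, 0 ≤ ⟪x, v⟫})
    (Lag : EuclideanSpace ℝ (Fin n) → EuclideanSpace ℝ (Fin p) → ℝ)
    (hLag : ∀ u x, Lag u x = f u + ⟪x, -(G u) - g⟫)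
    (uu : EuclideanSpace ℝ (Fin p) → EuclideanSpace ℝ (Fin n))
    (huu : ∀ x : EuclideanSpace ℝ (Fin p), uu x ∈ U ∧ ∀ u ∈ U, Lag (uu x) x ≤ Lag u x)
    (d : EuclideanSpace ℝ (Fin p) → ℝ) (hd : ∀ x, d x = Lag (uu x) x)
    (ustar : EuclideanSpace ℝ (Fin n))
    (hustar : ustar ∈ U ∧ G ustar + g ∈ K ∧ ∀ u ∈ U, G u + g ∈ K → f ustar ≤ f u)
    (fstar : ℝ) (hfstar : fstar = f ustar)
    (Xstar : Set (EuclideanSpace ℝ (Fin p))) (hXstar : Xstar = {x ∈ Kstar | d x = fstar})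
    (hXne : Xstar.Nonempty)
    (Ld : ℝ) (hLd : Ld = ‖G‖ ^ 2 / σf)
    (projKs : EuclideanSpace ℝ (Fin p) → EuclideanSpace ℝ (Fin p))
    (hprojKs : ∀ z : EuclideanSpace ℝ (Fin p), projKs z ∈ Kstar ∧ ∀ w ∈ Kstar, ‖z - projKs z‖ ≤ ‖z - w‖)
    (LG : ℝ) (hLG : Ld ≤ LG) (α : ℕ → ℝ)
    (hα : ∀ k, 1 / LG ≤ α k ∧ α k ≤ 1 / Ld)
    (x : ℕ → EuclideanSpace ℝ (Fin p)) (hx0K : x 0 ∈ Kstar)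
    (hxrec : ∀ k, x (k + 1) = projKs (x k + α k • (-(G (uu (x k))) - g)))
    (xstar : EuclideanSpace ℝ (Fin p)) (hxstar : xstar ∈ Xstar)
    (hxstarmin : ∀ z ∈ Xstar, ‖x 0 - xstar‖ ≤ ‖x 0 - z‖)
    (Rd : ℝ) (hRd : Rd = ‖x 0 - xstar‖)
    (S : ℕ → ℝ) (hS : ∀ k, S k = ∑ j ∈ Finset.range (k + 1), α j)
    (uhat : ℕ → EuclideanSpace ℝ (Fin n))
    (huhat : ∀ k, uhat k = (S k)⁻¹ • ∑ j ∈ Finset.range (k + 1), α j • uu (x j))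
 :
    ∀ k : ℕ,
      ‖uhat k - ustar‖ ^ 2 ≤
        (1 / ((k : ℝ) + 1)) *
          (LG * ‖x 0‖ ^ 2 / σf + 4 * LG * Rd * (Rd + ‖x 0‖) / σf) :=
  stmt_7_general f σf hσf hfsc U hUcv G hG g K Kstar hKstar Lag hLag uu huu d hd ustar hustar fstar
    hfstar Xstar hXstar Ld hLd projKs hprojKs LG hLG α hα x hxrec xstar hxstar Rd hRd S hS uhat
    huhat
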